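/- arXiv:1904.10945 — 3 statements merged into one kernel-verified Lean document; each statement's English description precedes it below -/
import Mathlib

section
/- For every δ > 0, the real 2n×2n block matrix A(δ) := [[−ΦᵀDΦ, γΦᵀDPΦ], [δI, −δI]] is Hurwitz, i.e., every (complex) eigenvalue of A(δ) has strictly negative real part. -/
open Matrix BigOperators

/-!
Let `(x, y)` be an eigenvector of `A(δ)` for `μ` with `0 ≤ Re μ`. The second block row gives
`y = c • x` with `c = δ / (μ + δ)`, so `‖c‖ ≤ 1` and `x ≠ 0`. Pairing the first block row with `x`,
`μ ‖x‖² = -‖Φx‖²_D + γ c ⟪Φx, P Φx⟫_D`. A stochastic `P` with stationary distribution `d` satisfies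
`|⟪z, P z⟫_D| ≤ ‖z‖²_D` (from `a b ≤ (a² + b²) / 2`), so the real part of the right-hand side is
at most `-(1 - γ) ‖Φx‖²_D`, which is negative because `Φ` is injective: a contradiction.
-/

namespace Matrix

variable {l m n : Type*} [Fintype n]

theorem mulVec_injective_of_rank_eq_card {K : Type*} [Field K] {A : Matrix m n K}
    (hA : A.rank = Fintype.card n) : Function.Injective A.mulVec := by
  have h := A.mulVecLin.finrank_range_add_finrank_ker
  rw [← rank, hA, Module.finrank_fintype_fun_eq_card, Nat.add_eq_left,
    Submodule.finrank_eq_zero] at h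
  exact LinearMap.ker_eq_bot.mp h

theorem re_map_ofReal_mulVec (A : Matrix m n ℝ) (x : n → ℂ) (i : m) :
    ((A.map ((↑) : ℝ → ℂ) *ᵥ x) i).re = (A *ᵥ fun j => (x j).re) i := by
  simp [mulVec, dotProduct, Complex.re_sum]

theorem im_map_ofReal_mulVec (A : Matrix m n ℝ) (x : n → ℂ) (i : m) :
    ((A.map ((↑) : ℝ → ℂ) *ᵥ x) i).im = (A *ᵥ fun j => (x j).im) i := by
  simp [mulVec, dotProduct, Complex.im_sum]

theorem map_ofReal_mulVec_injective {A : Matrix m n ℝ} (hA : Function.Injective A.mulVec) :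
    Function.Injective (A.map ((↑) : ℝ → ℂ)).mulVec := by
  intro x y hxy
  have hre : (A *ᵥ fun j => (x j).re) = A *ᵥ fun j => (y j).re := by
    ext i; rw [← re_map_ofReal_mulVec, ← re_map_ofReal_mulVec, hxy]
  have him : (A *ᵥ fun j => (x j).im) = A *ᵥ fun j => (y j).im := by
    ext i; rw [← im_map_ofReal_mulVec, ← im_map_ofReal_mulVec, hxy]
  exact funext fun j => Complex.ext (congrFun (hA hre) j) (congrFun (hA him) j)

omit [Fintype n] in
theorem map_ofReal_mul [Fintype m] (L : Matrix l m ℝ) (M : Matrix m n ℝ) :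
    (L * M).map ((↑) : ℝ → ℂ) = L.map ((↑) : ℝ → ℂ) * M.map ((↑) : ℝ → ℂ) :=
  Matrix.map_mul (f := Complex.ofRealHom)

theorem star_dotProduct_map_ofReal_transpose_mul_mul_mulVec [Fintype m] (Φ : Matrix m n ℝ)
    (Q : Matrix m m ℝ) (x : n → ℂ) :
    star x ⬝ᵥ (Φᵀ * Q * Φ).map ((↑) : ℝ → ℂ) *ᵥ x
      = star (Φ.map ((↑) : ℝ → ℂ) *ᵥ x) ⬝ᵥ Q.map ((↑) : ℝ → ℂ) *ᵥ Φ.map ((↑) : ℝ → ℂ) *ᵥ x := by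
  rw [map_ofReal_mul, map_ofReal_mul, ← mulVec_mulVec, ← mulVec_mulVec, dotProduct_mulVec,
    ← conjTranspose_eq_transpose_of_trivial Φ,
    conjTranspose_map _ fun r => (Complex.conj_ofReal r).symm, vecMul_conjTranspose, star_star]

theorem star_dotProduct_map_ofReal_diagonal_mulVec [Fintype m] [DecidableEq m] (d : m → ℝ)
    (z : m → ℂ) : star z ⬝ᵥ (diagonal d).map ((↑) : ℝ → ℂ) *ᵥ z = ↑(∑ i, d i * ‖z i‖ ^ 2) := by
  rw [diagonal_map Complex.ofReal_zero]
  push_cast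
  refine Finset.sum_congr rfl fun i _ => ?_
  rw [mulVec_diagonal, Pi.star_apply, Complex.star_def, mul_left_comm, Complex.conj_mul']

theorem sum_sum_mul_le_of_stochastic [Fintype m] {P : Matrix m m ℝ} {d : m → ℝ}
    (hP : ∀ i j, 0 ≤ P i j) (hrow : ∀ i, ∑ j, P i j = 1) (hd : ∀ i, 0 ≤ d i)
    (hstat : d ᵥ* P = d) (a : m → ℝ) :
    ∑ i, ∑ j, d i * P i j * (a i * a j) ≤ ∑ i, d i * a i ^ 2 := by
  have hrows : ∑ i, ∑ j, d i * P i j * a i ^ 2 = ∑ i, d i * a i ^ 2 := by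
    simp only [← Finset.sum_mul, ← Finset.mul_sum, hrow, mul_one]
  have hcols : ∑ i, ∑ j, d i * P i j * a j ^ 2 = ∑ i, d i * a i ^ 2 := by
    rw [Finset.sum_comm]
    simp only [← Finset.sum_mul]
    exact Finset.sum_congr rfl fun j _ => by rw [← congrFun hstat j]; rfl
  calc ∑ i, ∑ j, d i * P i j * (a i * a j)
      ≤ ∑ i, ∑ j, d i * P i j * ((a i ^ 2 + a j ^ 2) / 2) := by
        gcongr with i _ j _
        · exact mul_nonneg (hd i) (hP i j)
        · nlinarith [sq_nonneg (a i - a j)]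
    _ = (∑ i, ∑ j, d i * P i j * a i ^ 2 + ∑ i, ∑ j, d i * P i j * a j ^ 2) / 2 := by
        simp only [← Finset.sum_add_distrib, Finset.sum_div]
        exact Finset.sum_congr rfl fun i _ => Finset.sum_congr rfl fun j _ => by ring
    _ = ∑ i, d i * a i ^ 2 := by rw [hrows, hcols]; ring

theorem norm_star_dotProduct_map_ofReal_diagonal_mul_mulVec_le [Fintype m] [DecidableEq m]
    {P : Matrix m m ℝ} {d : m → ℝ}
    (hP : ∀ i j, 0 ≤ P i j) (hrow : ∀ i, ∑ j, P i j = 1) (hd : ∀ i, 0 ≤ d i)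
    (hstat : d ᵥ* P = d) (z : m → ℂ) :
    ‖star z ⬝ᵥ (diagonal d * P).map ((↑) : ℝ → ℂ) *ᵥ z‖ ≤ ∑ i, d i * ‖z i‖ ^ 2 :=
  calc ‖star z ⬝ᵥ (diagonal d * P).map ((↑) : ℝ → ℂ) *ᵥ z‖
      = ‖∑ i, ∑ j, ((d i * P i j : ℝ) : ℂ) * (star (z i) * z j)‖ := by
        simp only [dotProduct, mulVec, Finset.mul_sum, map_apply, diagonal_mul, Pi.star_apply,
          Complex.ofReal_mul]
        congr! 3 with i _ j _
        ring
    _ ≤ ∑ i, ∑ j, d i * P i j * (‖z i‖ * ‖z j‖) := by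
        refine (norm_sum_le _ _).trans (Finset.sum_le_sum fun i _ => ?_)
        refine (norm_sum_le _ _).trans (le_of_eq (Finset.sum_congr rfl fun j _ => ?_))
        rw [norm_mul, norm_mul, Complex.norm_real, norm_star,
          Real.norm_of_nonneg (mul_nonneg (hd i) (hP i j))]
    _ ≤ ∑ i, d i * ‖z i‖ ^ 2 := sum_sum_mul_le_of_stochastic hP hrow hd hstat _

open scoped ComplexOrder in
theorem re_lt_zero_of_neg_mulVec_add_smul_mulVec_eq_smul {M B : Matrix n n ℂ}
    (hMB : ∀ x ≠ 0, ‖star x ⬝ᵥ B *ᵥ x‖ < (star x ⬝ᵥ M *ᵥ x).re) {c μ : ℂ} (hc : ‖c‖ ≤ 1)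
    {x : n → ℂ} (hx : x ≠ 0) (h : -(M *ᵥ x) + c • (B *ᵥ x) = μ • x) : μ.re < 0 := by
  have hdot := congrArg (star x ⬝ᵥ ·) h
  simp only [dotProduct_add, dotProduct_neg, dotProduct_smul, smul_eq_mul] at hdot
  obtain ⟨hCre, hCim⟩ := Complex.pos_iff.mp (dotProduct_star_self_pos_iff.mpr hx)
  refine neg_of_mul_neg_left ?_ hCre.le
  calc μ.re * (star x ⬝ᵥ x).re = (-(star x ⬝ᵥ M *ᵥ x) + c * (star x ⬝ᵥ B *ᵥ x)).re := by
        rw [hdot, Complex.mul_re, ← hCim, mul_zero, sub_zero]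
    _ ≤ -(star x ⬝ᵥ M *ᵥ x).re + ‖star x ⬝ᵥ B *ᵥ x‖ := by
        rw [Complex.add_re, Complex.neg_re]
        gcongr
        calc (c * _).re ≤ ‖c * _‖ := Complex.re_le_norm _
          _ ≤ _ := by rw [norm_mul]; exact mul_le_of_le_one_left (norm_nonneg _) hc
    _ < 0 := by linarith [hMB x hx]

theorem re_lt_zero_of_fromBlocks_mulVec_eq_smul [DecidableEq n] {M B : Matrix n n ℂ}
    (hMB : ∀ x ≠ 0, ‖star x ⬝ᵥ B *ᵥ x‖ < (star x ⬝ᵥ M *ᵥ x).re) {δ : ℝ} (hδ : 0 < δ)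
    {μ : ℂ} {v : n ⊕ n → ℂ} (hv : v ≠ 0)
    (h : fromBlocks (-M) B ((δ : ℂ) • 1) (-((δ : ℂ) • 1)) *ᵥ v = μ • v) : μ.re < 0 := by
  by_contra! hμ
  obtain ⟨x, y, rfl⟩ : ∃ x y, v = Sum.elim x y := ⟨_, _, (Sum.elim_comp_inl_inr v).symm⟩
  have htop : -(M *ᵥ x) + B *ᵥ y = μ • x := by
    ext i
    simpa [fromBlocks_mulVec, neg_mulVec] using congrFun h (Sum.inl i)
  have hbot : (δ : ℂ) • x - (δ : ℂ) • y = μ • y := by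
    ext i
    simpa [fromBlocks_mulVec, neg_mulVec, smul_mulVec, sub_eq_add_neg]
      using congrFun h (Sum.inr i)
  have hμδ : δ ≤ ‖μ + δ‖ := by
    refine le_trans ?_ (Complex.re_le_norm _)
    simpa using hμ
  have hne : μ + δ ≠ 0 := by
    rintro h0
    rw [h0, norm_zero] at hμδ
    linarith
  have hy : y = ((δ : ℂ) / (μ + δ)) • x := by
    rw [div_eq_inv_mul, mul_smul, eq_inv_smul_iff₀ hne, add_smul, ← hbot]
    module
  have hx : x ≠ 0 := by
    rintro rfl
    exact hv (by rw [hy, smul_zero, Sum.elim_zero_zero])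
  refine hμ.not_gt
    (re_lt_zero_of_neg_mulVec_add_smul_mulVec_eq_smul hMB (c := δ / (μ + δ)) ?_ hx ?_)
  · rw [norm_div, Complex.norm_real, Real.norm_of_nonneg hδ.le]
    exact div_le_one_of_le₀ hμδ (norm_nonneg _)
  · rw [← mulVec_smul, ← hy]
    simpa [neg_mulVec] using htop

end Matrix

theorem averaging_TD_ODE_matrix_is_Hurwitz_general
    (N n : ℕ)
    (P : Matrix (Fin N) (Fin N) ℝ) (d : Fin N → ℝ) (γ : ℝ)
    (Φ : Matrix (Fin N) (Fin n) ℝ)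
    (hPnonneg : ∀ i j, 0 ≤ P i j)
    (hProw : ∀ i, ∑ j, P i j = 1)
    (hdpos : ∀ s, 0 < d s)
    (hstat : Matrix.vecMul d P = d)
    (hγ0 : 0 < γ) (hγ1 : γ < 1)
    (hΦ : Φ.rank = n)
    (δ : ℝ) (hδ : 0 < δ) :
    let D : Matrix (Fin N) (Fin N) ℝ := Matrix.diagonal d
    let A : Matrix (Fin n ⊕ Fin n) (Fin n ⊕ Fin n) ℝ :=
      Matrix.fromBlocks (-(Φᵀ * D * Φ)) (γ • (Φᵀ * D * P * Φ))
        (δ • (1 : Matrix (Fin n) (Fin n) ℝ)) (-(δ • (1 : Matrix (Fin n) (Fin n) ℝ)))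
    ∀ (μ : ℂ) (v : (Fin n ⊕ Fin n) → ℂ), v ≠ 0 →
      (A.map (fun x : ℝ => (x : ℂ))).mulVec v = μ • v → μ.re < 0 := by
  intro D A μ v hv h
  have hA : A.map (fun x : ℝ => (x : ℂ)) = fromBlocks (-(Φᵀ * D * Φ).map (↑))
      ((γ : ℂ) • (Φᵀ * (D * P) * Φ).map (↑)) ((δ : ℂ) • 1) (-((δ : ℂ) • 1)) := by
    simp only [A, fromBlocks_map, Matrix.mul_assoc]
    congr 1 <;> ext i j <;> by_cases hij : i = j <;> simp [hij]
  have hΦinj := map_ofReal_mulVec_injective (mulVec_injective_of_rank_eq_card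
    (hΦ.trans (Fintype.card_fin n).symm))
  refine re_lt_zero_of_fromBlocks_mulVec_eq_smul (fun x hx => ?_) hδ hv (hA ▸ h)
  set z := Φ.map ((↑) : ℝ → ℂ) *ᵥ x
  have hz : z ≠ 0 := fun hz => hx (hΦinj (hz.trans (mulVec_zero _).symm))
  obtain ⟨s, hs⟩ := Function.ne_iff.mp hz
  have hpos : 0 < ∑ s, d s * ‖z s‖ ^ 2 := Finset.sum_pos'
    (fun s _ => mul_nonneg (hdpos s).le (sq_nonneg _))
    ⟨s, Finset.mem_univ s, mul_pos (hdpos s) (pow_pos (norm_pos_iff.mpr hs) 2)⟩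
  rw [smul_mulVec, dotProduct_smul, star_dotProduct_map_ofReal_transpose_mul_mul_mulVec,
    star_dotProduct_map_ofReal_transpose_mul_mul_mulVec,
    star_dotProduct_map_ofReal_diagonal_mulVec, Complex.ofReal_re, norm_smul, Complex.norm_real,
    Real.norm_of_nonneg hγ0.le]
  calc γ * ‖star z ⬝ᵥ (diagonal d * P).map (↑) *ᵥ z‖ ≤ γ * ∑ s, d s * ‖z s‖ ^ 2 :=
        mul_le_mul_of_nonneg_left (norm_star_dotProduct_map_ofReal_diagonal_mul_mulVec_le
          hPnonneg hProw (fun s => (hdpos s).le) hstat z) hγ0.le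
    _ < ∑ s, d s * ‖z s‖ ^ 2 := mul_lt_of_lt_one_left hpos hγ1

/-- For every `δ > 0`, the real `2n×2n` block matrix
`A(δ) := [[−ΦᵀDΦ, γΦᵀDPΦ], [δI, −δI]]` (the system matrix of the ODE associated
with the averaging TD algorithm) is Hurwitz: every complex eigenvalue of `A(δ)`
has strictly negative real part. -/
theorem averaging_TD_ODE_matrix_is_Hurwitz
    (N n : ℕ) (hN : 0 < N) (hn : 0 < n) (hnN : n ≤ N)
    (P : Matrix (Fin N) (Fin N) ℝ) (d : Fin N → ℝ) (γ : ℝ)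
    (Φ : Matrix (Fin N) (Fin n) ℝ)
    (hPnonneg : ∀ i j, 0 ≤ P i j)
    (hProw : ∀ i, ∑ j, P i j = 1)
    (hdpos : ∀ s, 0 < d s)
    (hdsum : ∑ s, d s = 1)
    (hstat : Matrix.vecMul d P = d)
    (hγ0 : 0 < γ) (hγ1 : γ < 1)
    (hΦ : Φ.rank = n)
    (δ : ℝ) (hδ : 0 < δ) :
    let D : Matrix (Fin N) (Fin N) ℝ := Matrix.diagonal d
    let A : Matrix (Fin n ⊕ Fin n) (Fin n ⊕ Fin n) ℝ :=
      Matrix.fromBlocks (-(Φᵀ * D * Φ)) (γ • (Φᵀ * D * P * Φ))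
        (δ • (1 : Matrix (Fin n) (Fin n) ℝ)) (-(δ • (1 : Matrix (Fin n) (Fin n) ℝ)))
    ∀ (μ : ℂ) (v : (Fin n ⊕ Fin n) → ℂ), v ≠ 0 →
      (A.map (fun x : ℝ => (x : ℂ))).mulVec v = μ • v → μ.re < 0 :=
  averaging_TD_ODE_matrix_is_Hurwitz_general N n P d γ Φ hPnonneg hProw hdpos hstat hγ0 hγ1 hΦ δ hδ
end

section
/- Let T be a positive integer, let ε_1, …, ε_T ≥ 0, and let θ_0, θ_1, …, θ_T ∈ ℝⁿ satisfy ‖θ_{k+1} − G(θ_k)‖₂² ≤ ε_{k+1} for all k = 0, 1, …, T−1, where G(θ) := (ΦᵀDΦ)⁻¹ΦᵀD(R + γPΦθ). Then ‖Φθ_T − Φθ*‖_D ≤ √(λ_max(ΦᵀDΦ)) · ∑_{k=1}^{T} γ^{T−k}√(ε_k) + γ^T‖Φθ_0 − Φθ*‖_D, where θ* := −(ΦᵀD(γP − I)Φ)⁻¹ΦᵀDR is the solution of the projected Bellman equation. -/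
open Matrix

/-! The affine map `θ ↦ Φ G(θ)` is a `γ`-contraction for `‖·‖_D`: it is the `D`-orthogonal
projection onto the range of `Φ` (nonexpansive) applied to `R + γ P Φ θ`, and `P` is nonexpansive
for `‖·‖_D` by Jensen's inequality and stationarity of `d`. The same contraction makes
`ΦᵀD(γP − I)Φ` invertible, so `θ*` is the fixed point of `G`. Each inexact step adds at most
`√λ_max · √ε_{k+1}` to `γ` times the previous error, since `‖Φv‖_D² = vᵀΦᵀDΦv ≤ λ_max ‖v‖₂²`;
unrolling this recursion gives the bound. -/

namespace Matrix

variable {ι κ : Type*} [Fintype ι] [Fintype κ]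

theorem dotProduct_diagonal_mulVec_self [DecidableEq ι] (d x : ι → ℝ) :
    x ⬝ᵥ diagonal d *ᵥ x = ∑ i, d i * x i ^ 2 := by
  simp only [dotProduct, mulVec_diagonal]
  exact Finset.sum_congr rfl fun i _ => by ring

theorem dotProduct_transpose_mul_mul_mulVec (Φ : Matrix ι κ ℝ) (A : Matrix ι ι ℝ)
    (v w : κ → ℝ) : v ⬝ᵥ (Φᵀ * A * Φ) *ᵥ w = Φ *ᵥ v ⬝ᵥ A *ᵥ (Φ *ᵥ w) := by
  rw [← mulVec_mulVec, ← mulVec_mulVec, dotProduct_mulVec, vecMul_transpose]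

theorem nonsing_inv_mulVec_mulVec [DecidableEq κ] {A : Matrix κ κ ℝ} (hA : IsUnit A)
    (v : κ → ℝ) : A⁻¹ *ᵥ A *ᵥ v = v := by
  rw [mulVec_mulVec, nonsing_inv_mul _ ((isUnit_iff_isUnit_det A).1 hA), one_mulVec]

theorem mulVec_nonsing_inv_mulVec [DecidableEq κ] {A : Matrix κ κ ℝ} (hA : IsUnit A)
    (v : κ → ℝ) : A *ᵥ A⁻¹ *ᵥ v = v := by
  rw [mulVec_mulVec, mul_nonsing_inv _ ((isUnit_iff_isUnit_det A).1 hA), one_mulVec]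

omit [Fintype ι] in
theorem mulVec_injective_of_rank_eq {Φ : Matrix ι κ ℝ}
    (hΦ : Φ.rank = Fintype.card κ) : Function.Injective Φ.mulVec := by
  rw [mulVec_injective_iff, linearIndependent_iff_card_eq_finrank_span, ← hΦ,
    rank_eq_finrank_span_cols]
  rfl

theorem posDef_transpose_mul_diagonal_mul [DecidableEq ι] {d : ι → ℝ} (hd : ∀ i, 0 < d i)
    {Φ : Matrix ι κ ℝ} (hΦ : Function.Injective Φ.mulVec) : (Φᵀ * diagonal d * Φ).PosDef := by
  simpa only [conjTranspose_eq_transpose_of_trivial] using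
    (posDef_diagonal_iff.2 hd).conjTranspose_mul_mul_same hΦ

theorem IsHermitian.dotProduct_mulVec_le_iSup_eigenvalues [DecidableEq κ] {A : Matrix κ κ ℝ}
    (hA : A.IsHermitian) (v : κ → ℝ) :
    v ⬝ᵥ A *ᵥ v ≤ (⨆ i, hA.eigenvalues i) * (v ⬝ᵥ v) := by
  set U : Matrix κ κ ℝ := (hA.eigenvectorUnitary : Matrix κ κ ℝ)
  have hUUt : U * Uᵀ = 1 := by
    simpa [U, star_eq_conjTranspose] using mem_unitaryGroup_iff.mp hA.eigenvectorUnitary.2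
  have hA_eq : A = U * diagonal hA.eigenvalues * Uᵀ := by
    simpa [U, Unitary.conjStarAlgAut_apply, star_eq_conjTranspose] using hA.spectral_theorem
  set y := Uᵀ *ᵥ v
  have hvv : v ⬝ᵥ v = ∑ i, y i ^ 2 := by
    have h := dotProduct_transpose_mul_mul_mulVec Uᵀ 1 v v
    rw [transpose_transpose, Matrix.mul_one, hUUt, one_mulVec, one_mulVec] at h
    rw [h]
    simp only [dotProduct, sq, y]
  have hvAv : v ⬝ᵥ A *ᵥ v = ∑ i, hA.eigenvalues i * y i ^ 2 := by
    have h := dotProduct_transpose_mul_mul_mulVec Uᵀ (diagonal hA.eigenvalues) v v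
    rw [transpose_transpose, ← hA_eq] at h
    rw [h, dotProduct_diagonal_mulVec_self]
  rw [hvAv, hvv, Finset.mul_sum]
  exact Finset.sum_le_sum fun i _ => mul_le_mul_of_nonneg_right
    (le_ciSup (Set.finite_range _).bddAbove i) (sq_nonneg _)

end Matrix

section WeightedNorm

variable {ι κ : Type*} [Fintype ι] [DecidableEq ι] [Fintype κ] {d : ι → ℝ}

noncomputable def weightedNorm (d x : ι → ℝ) : ℝ := √(x ⬝ᵥ diagonal d *ᵥ x)

noncomputable def sqrtWeight (d : ι → ℝ) : (ι → ℝ) →ₗ[ℝ] EuclideanSpace ℝ ι where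
  toFun x := WithLp.toLp 2 fun i => √(d i) * x i
  map_add' x y := by ext; simp [mul_add]
  map_smul' c x := by ext; simp [mul_left_comm]

theorem inner_sqrtWeight (hd : ∀ i, 0 ≤ d i) (x y : ι → ℝ) :
    inner ℝ (sqrtWeight d x) (sqrtWeight d y) = x ⬝ᵥ diagonal d *ᵥ y := by
  simp only [sqrtWeight, LinearMap.coe_mk, AddHom.coe_mk, PiLp.inner_apply, RCLike.inner_apply,
    conj_trivial, dotProduct, mulVec_diagonal]
  refine Finset.sum_congr rfl fun i _ => ?_
  rw [mul_mul_mul_comm, Real.mul_self_sqrt (hd i)]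
  ring

theorem weightedNorm_eq_norm_sqrtWeight (hd : ∀ i, 0 ≤ d i) (x : ι → ℝ) :
    weightedNorm d x = ‖sqrtWeight d x‖ := by
  rw [norm_eq_sqrt_real_inner, inner_sqrtWeight hd, weightedNorm]

theorem weightedNorm_nonneg (x : ι → ℝ) : 0 ≤ weightedNorm d x := Real.sqrt_nonneg _

theorem weightedNorm_sq (hd : ∀ i, 0 ≤ d i) (x : ι → ℝ) :
    weightedNorm d x ^ 2 = x ⬝ᵥ diagonal d *ᵥ x := by
  rw [weightedNorm_eq_norm_sqrtWeight hd, ← real_inner_self_eq_norm_sq, inner_sqrtWeight hd]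

theorem weightedNorm_add_le (hd : ∀ i, 0 ≤ d i) (x y : ι → ℝ) :
    weightedNorm d (x + y) ≤ weightedNorm d x + weightedNorm d y := by
  simp only [weightedNorm_eq_norm_sqrtWeight hd, map_add]
  exact norm_add_le _ _

theorem weightedNorm_smul (hd : ∀ i, 0 ≤ d i) (c : ℝ) (x : ι → ℝ) :
    weightedNorm d (c • x) = |c| * weightedNorm d x := by
  simp only [weightedNorm_eq_norm_sqrtWeight hd, map_smul, norm_smul, Real.norm_eq_abs]

theorem dotProduct_diagonal_mulVec_le (hd : ∀ i, 0 ≤ d i) (x y : ι → ℝ) :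
    x ⬝ᵥ diagonal d *ᵥ y ≤ weightedNorm d x * weightedNorm d y := by
  simpa only [inner_sqrtWeight hd, weightedNorm_eq_norm_sqrtWeight hd] using
    real_inner_le_norm (sqrtWeight d x) (sqrtWeight d y)

theorem eq_zero_of_weightedNorm_eq_zero (hd : ∀ i, 0 < d i) {x : ι → ℝ}
    (hx : weightedNorm d x = 0) : x = 0 := by
  rw [weightedNorm_eq_norm_sqrtWeight (fun i => (hd i).le), norm_eq_zero] at hx
  funext i
  simpa [sqrtWeight, (Real.sqrt_pos.2 (hd i)).ne'] using congrArg (· i) hx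

theorem weightedNorm_mulVec_le_of_stationary {P : Matrix ι ι ℝ} (hP : ∀ i j, 0 ≤ P i j)
    (hP1 : ∀ i, ∑ j, P i j = 1) (hd : ∀ i, 0 ≤ d i) (hdP : d ᵥ* P = d) (x : ι → ℝ) :
    weightedNorm d (P *ᵥ x) ≤ weightedNorm d x := by
  have jensen (i : ι) : (P *ᵥ x) i ^ 2 ≤ ∑ j, P i j * x j ^ 2 := by
    simpa [mulVec, dotProduct] using even_two.convexOn_pow.map_sum_le (t := Finset.univ)
      (w := P i) (p := x) (fun j _ => hP i j) (hP1 i) (fun j _ => Set.mem_univ _)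
  refine Real.sqrt_le_sqrt ?_
  calc P *ᵥ x ⬝ᵥ diagonal d *ᵥ (P *ᵥ x) = ∑ i, d i * (P *ᵥ x) i ^ 2 :=
        dotProduct_diagonal_mulVec_self _ _
    _ ≤ ∑ i, d i * ∑ j, P i j * x j ^ 2 :=
        Finset.sum_le_sum fun i _ => mul_le_mul_of_nonneg_left (jensen i) (hd i)
    _ = ∑ j, (d ᵥ* P) j * x j ^ 2 := by
        simp only [vecMul, dotProduct, Finset.mul_sum, Finset.sum_mul, mul_assoc]
        exact Finset.sum_comm
    _ = x ⬝ᵥ diagonal d *ᵥ x := by rw [hdP, dotProduct_diagonal_mulVec_self]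

theorem weightedNorm_mulVec_le_sqrt_iSup_eigenvalues [DecidableEq κ] (Φ : Matrix ι κ ℝ)
    (hM : (Φᵀ * diagonal d * Φ).IsHermitian) (w : κ → ℝ) :
    weightedNorm d (Φ *ᵥ w) ≤ √(⨆ i, hM.eigenvalues i) * √(∑ i, w i ^ 2) := by
  have h := hM.dotProduct_mulVec_le_iSup_eigenvalues w
  rw [dotProduct_transpose_mul_mul_mulVec] at h
  rw [weightedNorm, ← Real.sqrt_mul' _ (Finset.sum_nonneg fun i _ => sq_nonneg (w i))]
  simpa only [dotProduct, sq] using Real.sqrt_le_sqrt h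

theorem weightedNorm_mulVec_projection_le [DecidableEq κ] (hd : ∀ i, 0 ≤ d i)
    {Φ : Matrix ι κ ℝ} (hM : IsUnit (Φᵀ * diagonal d * Φ)) (z : ι → ℝ) :
    weightedNorm d (Φ *ᵥ (Φᵀ * diagonal d * Φ)⁻¹ *ᵥ (Φᵀ * diagonal d) *ᵥ z) ≤
      weightedNorm d z := by
  set w := (Φᵀ * diagonal d * Φ)⁻¹ *ᵥ (Φᵀ * diagonal d) *ᵥ z
  have hsq : weightedNorm d (Φ *ᵥ w) ^ 2 ≤ weightedNorm d (Φ *ᵥ w) * weightedNorm d z :=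
    calc weightedNorm d (Φ *ᵥ w) ^ 2 = w ⬝ᵥ (Φᵀ * diagonal d * Φ) *ᵥ w := by
          rw [weightedNorm_sq hd, dotProduct_transpose_mul_mul_mulVec]
      _ = Φ *ᵥ w ⬝ᵥ diagonal d *ᵥ z := by
          rw [mulVec_nonsing_inv_mulVec hM, ← mulVec_mulVec, dotProduct_mulVec,
            vecMul_transpose]
      _ ≤ weightedNorm d (Φ *ᵥ w) * weightedNorm d z := dotProduct_diagonal_mulVec_le hd _ _
  nlinarith [weightedNorm_nonneg (d := d) (Φ *ᵥ w), weightedNorm_nonneg (d := d) z]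

end WeightedNorm

section ProjectedBellman

variable {ι κ : Type*} [Fintype ι] [DecidableEq ι] [Fintype κ] [DecidableEq κ]
  {P : Matrix ι ι ℝ} {d : ι → ℝ} {γ : ℝ} {Φ : Matrix ι κ ℝ}

noncomputable def projectedBellman (P : Matrix ι ι ℝ) (d R : ι → ℝ) (γ : ℝ) (Φ : Matrix ι κ ℝ)
    (θ : κ → ℝ) : κ → ℝ :=
  (Φᵀ * diagonal d * Φ)⁻¹ *ᵥ (Φᵀ * diagonal d) *ᵥ (R + γ • P *ᵥ Φ *ᵥ θ)

noncomputable def tdFixedPoint (P : Matrix ι ι ℝ) (d R : ι → ℝ) (γ : ℝ) (Φ : Matrix ι κ ℝ) :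
    κ → ℝ :=
  -((Φᵀ * diagonal d * (γ • P - 1) * Φ)⁻¹ *ᵥ (Φᵀ * diagonal d) *ᵥ R)

omit [DecidableEq κ] in
theorem mul_smul_sub_one_mul_mulVec (B : Matrix κ ι ℝ) (v : κ → ℝ) :
    (B * (γ • P - 1) * Φ) *ᵥ v = B *ᵥ (γ • P *ᵥ Φ *ᵥ v) - (B * Φ) *ᵥ v := by
  rw [← mulVec_mulVec, ← mulVec_mulVec, ← mulVec_mulVec, sub_mulVec, smul_mulVec, one_mulVec,
    mulVec_sub]

theorem weightedNorm_projection_smul_mulVec_le (hP : ∀ i j, 0 ≤ P i j)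
    (hP1 : ∀ i, ∑ j, P i j = 1) (hd : ∀ i, 0 ≤ d i) (hdP : d ᵥ* P = d) (hγ : 0 ≤ γ)
    (hM : IsUnit (Φᵀ * diagonal d * Φ)) (v : κ → ℝ) :
    weightedNorm d (Φ *ᵥ (Φᵀ * diagonal d * Φ)⁻¹ *ᵥ (Φᵀ * diagonal d) *ᵥ (γ • P *ᵥ Φ *ᵥ v)) ≤
      γ * weightedNorm d (Φ *ᵥ v) :=
  calc _ ≤ weightedNorm d (γ • P *ᵥ Φ *ᵥ v) := weightedNorm_mulVec_projection_le hd hM _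
    _ = γ * weightedNorm d (P *ᵥ Φ *ᵥ v) := by rw [weightedNorm_smul hd, abs_of_nonneg hγ]
    _ ≤ γ * weightedNorm d (Φ *ᵥ v) :=
        mul_le_mul_of_nonneg_left (weightedNorm_mulVec_le_of_stationary hP hP1 hd hdP _) hγ

theorem weightedNorm_projectedBellman_sub_le (hP : ∀ i j, 0 ≤ P i j)
    (hP1 : ∀ i, ∑ j, P i j = 1) (hd : ∀ i, 0 ≤ d i) (hdP : d ᵥ* P = d) (hγ : 0 ≤ γ)
    (hM : IsUnit (Φᵀ * diagonal d * Φ)) (R : ι → ℝ) (θ θ' : κ → ℝ) :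
    weightedNorm d (Φ *ᵥ projectedBellman P d R γ Φ θ - Φ *ᵥ projectedBellman P d R γ Φ θ') ≤
      γ * weightedNorm d (Φ *ᵥ θ - Φ *ᵥ θ') := by
  have h := weightedNorm_projection_smul_mulVec_le hP hP1 hd hdP hγ hM (θ - θ')
  simpa only [projectedBellman, ← mulVec_sub, add_sub_add_left_eq_sub, ← smul_sub] using h

theorem isUnit_transpose_mul_diagonal_mul_smul_sub_one_mul (hP : ∀ i j, 0 ≤ P i j)
    (hP1 : ∀ i, ∑ j, P i j = 1) (hd : ∀ i, 0 < d i) (hdP : d ᵥ* P = d) (hγ0 : 0 ≤ γ)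
    (hγ1 : γ < 1) (hΦ : Function.Injective Φ.mulVec) :
    IsUnit (Φᵀ * diagonal d * (γ • P - 1) * Φ) := by
  have hM := (posDef_transpose_mul_diagonal_mul hd hΦ).isUnit
  rw [← mulVec_injective_iff_isUnit]
  refine (injective_iff_map_eq_zero (mulVecLin _)).2 fun v hv => ?_
  rw [mulVecLin_apply, mul_smul_sub_one_mul_mulVec, sub_eq_zero] at hv
  have hfix : (Φᵀ * diagonal d * Φ)⁻¹ *ᵥ (Φᵀ * diagonal d) *ᵥ (γ • P *ᵥ Φ *ᵥ v) = v := by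
    rw [hv, nonsing_inv_mulVec_mulVec hM]
  have hle := weightedNorm_projection_smul_mulVec_le hP hP1 (fun i => (hd i).le) hdP hγ0 hM v
  rw [hfix] at hle
  have h0 : weightedNorm d (Φ *ᵥ v) = 0 := by
    nlinarith [weightedNorm_nonneg (d := d) (Φ *ᵥ v)]
  exact hΦ (by rw [eq_zero_of_weightedNorm_eq_zero hd h0, mulVec_zero])

theorem projectedBellman_tdFixedPoint (hM : IsUnit (Φᵀ * diagonal d * Φ))
    (hA : IsUnit (Φᵀ * diagonal d * (γ • P - 1) * Φ)) (R : ι → ℝ) :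
    projectedBellman P d R γ Φ (tdFixedPoint P d R γ Φ) = tdFixedPoint P d R γ Φ := by
  have hAθ : (Φᵀ * diagonal d * (γ • P - 1) * Φ) *ᵥ tdFixedPoint P d R γ Φ =
      -((Φᵀ * diagonal d) *ᵥ R) := by
    rw [tdFixedPoint, mulVec_neg, mulVec_nonsing_inv_mulVec hA]
  set θ := tdFixedPoint P d R γ Φ
  have hMθ : (Φᵀ * diagonal d) *ᵥ (R + γ • P *ᵥ Φ *ᵥ θ) = (Φᵀ * diagonal d * Φ) *ᵥ θ := by
    rw [mul_smul_sub_one_mul_mulVec] at hAθ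
    rw [mulVec_add]
    linear_combination hAθ
  rw [projectedBellman, hMθ, nonsing_inv_mulVec_mulVec hM]

theorem weightedNorm_sub_le_of_sum_sq_sub_projectedBellman_le (hP : ∀ i j, 0 ≤ P i j)
    (hP1 : ∀ i, ∑ j, P i j = 1) (hd : ∀ i, 0 ≤ d i) (hdP : d ᵥ* P = d) (hγ : 0 ≤ γ)
    (hM : IsUnit (Φᵀ * diagonal d * Φ)) (hHerm : (Φᵀ * diagonal d * Φ).IsHermitian)
    {R : ι → ℝ} {θ₀ θ θ' : κ → ℝ} (hfix : projectedBellman P d R γ Φ θ₀ = θ₀) {ε : ℝ}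
    (hθ' : ∑ i, (θ' i - projectedBellman P d R γ Φ θ i) ^ 2 ≤ ε) :
    weightedNorm d (Φ *ᵥ θ' - Φ *ᵥ θ₀) ≤
      √(⨆ i, hHerm.eigenvalues i) * √ε + γ * weightedNorm d (Φ *ᵥ θ - Φ *ᵥ θ₀) := by
  set G := projectedBellman P d R γ Φ
  calc weightedNorm d (Φ *ᵥ θ' - Φ *ᵥ θ₀)
      = weightedNorm d ((Φ *ᵥ θ' - Φ *ᵥ G θ) + (Φ *ᵥ G θ - Φ *ᵥ G θ₀)) := by
        rw [hfix, sub_add_sub_cancel]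
    _ ≤ weightedNorm d (Φ *ᵥ (θ' - G θ)) + weightedNorm d (Φ *ᵥ G θ - Φ *ᵥ G θ₀) := by
        rw [mulVec_sub]
        exact weightedNorm_add_le hd _ _
    _ ≤ √(⨆ i, hHerm.eigenvalues i) * √ε + γ * weightedNorm d (Φ *ᵥ θ - Φ *ᵥ θ₀) := by
        gcongr
        · exact (weightedNorm_mulVec_le_sqrt_iSup_eigenvalues Φ hHerm _).trans
            (mul_le_mul_of_nonneg_left (Real.sqrt_le_sqrt hθ') (Real.sqrt_nonneg _))
        · exact weightedNorm_projectedBellman_sub_le hP hP1 hd hdP hγ hM R θ θ₀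

end ProjectedBellman

theorem le_sum_pow_mul_add_pow_mul {γ : ℝ} (hγ : 0 ≤ γ) {e a : ℕ → ℝ} {T : ℕ}
    (h : ∀ k < T, e (k + 1) ≤ a (k + 1) + γ * e k) :
    e T ≤ ∑ k ∈ Finset.Icc 1 T, γ ^ (T - k) * a k + γ ^ T * e 0 := by
  induction T with
  | zero => simp
  | succ T ih =>
    have ih := ih fun k hk => h k (by omega)
    have hsum : ∑ k ∈ Finset.Icc 1 (T + 1), γ ^ (T + 1 - k) * a k =
        a (T + 1) + γ * ∑ k ∈ Finset.Icc 1 T, γ ^ (T - k) * a k := by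
      rw [Finset.sum_Icc_succ_top (by omega), Nat.sub_self, pow_zero, one_mul, add_comm,
        Finset.mul_sum]
      congr 1
      refine Finset.sum_congr rfl fun k hk => ?_
      rw [Nat.sub_add_comm (Finset.mem_Icc.1 hk).2, pow_succ]
      ring
    rw [hsum, pow_succ]
    nlinarith [h T (by omega)]

theorem deterministic_periodic_TD_error_bound_general
    (N n : ℕ)
    (P : Matrix (Fin N) (Fin N) ℝ) (d : Fin N → ℝ) (γ : ℝ)
    (Φ : Matrix (Fin N) (Fin n) ℝ) (R : Fin N → ℝ)
    (hPnonneg : ∀ i j, 0 ≤ P i j)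
    (hProw : ∀ i, ∑ j, P i j = 1)
    (hdpos : ∀ s, 0 < d s)
    (hstat : Matrix.vecMul d P = d)
    (hγ0 : 0 < γ) (hγ1 : γ < 1)
    (hΦ : Φ.rank = n)
    (hHerm : (Φᵀ * Matrix.diagonal d * Φ).IsHermitian)
    (T : ℕ)
    (ε : ℕ → ℝ)
    (θ : ℕ → Fin n → ℝ)
    (hrec : ∀ k < T,
      (∑ i, (θ (k + 1) i -
        ((Φᵀ * Matrix.diagonal d * Φ)⁻¹.mulVec
          ((Φᵀ * Matrix.diagonal d).mulVec
            (R + γ • P.mulVec (Φ.mulVec (θ k))))) i) ^ 2) ≤ ε (k + 1)) :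
    let D : Matrix (Fin N) (Fin N) ℝ := Matrix.diagonal d
    let normD : (Fin N → ℝ) → ℝ := fun v => Real.sqrt (v ⬝ᵥ D.mulVec v)
    let θstar : Fin n → ℝ :=
      -((Φᵀ * D * (γ • P - 1) * Φ)⁻¹.mulVec ((Φᵀ * D).mulVec R))
    normD (Φ.mulVec (θ T) - Φ.mulVec θstar) ≤
      Real.sqrt (⨆ i, hHerm.eigenvalues i) *
        (∑ k ∈ Finset.Icc 1 T, γ ^ (T - k) * Real.sqrt (ε k)) +
      γ ^ T * normD (Φ.mulVec (θ 0) - Φ.mulVec θstar) := by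
  intro D normD θstar
  have hΦinj := mulVec_injective_of_rank_eq (hΦ.trans (Fintype.card_fin n).symm)
  have hM := (posDef_transpose_mul_diagonal_mul hdpos hΦinj).isUnit
  have hfix : projectedBellman P d R γ Φ θstar = θstar := projectedBellman_tdFixedPoint hM
    (isUnit_transpose_mul_diagonal_mul_smul_sub_one_mul hPnonneg hProw hdpos hstat hγ0.le hγ1
      hΦinj) R
  have hstep (k : ℕ) (hk : k < T) : normD (Φ *ᵥ θ (k + 1) - Φ *ᵥ θstar) ≤
      √(⨆ i, hHerm.eigenvalues i) * √(ε (k + 1)) + γ * normD (Φ *ᵥ θ k - Φ *ᵥ θstar) :=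
    weightedNorm_sub_le_of_sum_sq_sub_projectedBellman_le hPnonneg hProw (fun i => (hdpos i).le)
      hstat hγ0.le hM hHerm hfix (hrec k hk)
  calc normD (Φ *ᵥ θ T - Φ *ᵥ θstar)
      ≤ ∑ k ∈ Finset.Icc 1 T, γ ^ (T - k) * (√(⨆ i, hHerm.eigenvalues i) * √(ε k)) +
          γ ^ T * normD (Φ *ᵥ θ 0 - Φ *ᵥ θstar) :=
        le_sum_pow_mul_add_pow_mul (e := fun k => normD (Φ *ᵥ θ k - Φ *ᵥ θstar)) hγ0.le hstep
    _ = _ := by simp only [Finset.mul_sum, mul_left_comm]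

/-- If `‖θ_{k+1} − G(θ_k)‖₂² ≤ ε_{k+1}` for `k = 0,…,T−1`, where
`G(θ) := (ΦᵀDΦ)⁻¹ΦᵀD(R + γPΦθ)`, then
`‖Φθ_T − Φθ*‖_D ≤ √(λ_max(ΦᵀDΦ)) · ∑_{k=1}^{T} γ^{T−k}√(ε_k)
  + γ^T‖Φθ_0 − Φθ*‖_D`,
where `θ* := −(ΦᵀD(γP − I)Φ)⁻¹ΦᵀDR`. -/
theorem deterministic_periodic_TD_error_bound
    (N n : ℕ) (hN : 0 < N) (hn : 0 < n) (hnN : n ≤ N)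
    (P : Matrix (Fin N) (Fin N) ℝ) (d : Fin N → ℝ) (γ : ℝ)
    (Φ : Matrix (Fin N) (Fin n) ℝ) (R : Fin N → ℝ)
    (hPnonneg : ∀ i j, 0 ≤ P i j)
    (hProw : ∀ i, ∑ j, P i j = 1)
    (hdpos : ∀ s, 0 < d s)
    (hdsum : ∑ s, d s = 1)
    (hstat : Matrix.vecMul d P = d)
    (hγ0 : 0 < γ) (hγ1 : γ < 1)
    (hΦ : Φ.rank = n)
    (hHerm : (Φᵀ * Matrix.diagonal d * Φ).IsHermitian)
    (T : ℕ) (hT : 0 < T)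
    (ε : ℕ → ℝ) (hε : ∀ k, 1 ≤ k → k ≤ T → 0 ≤ ε k)
    (θ : ℕ → Fin n → ℝ)
    (hrec : ∀ k < T,
      (∑ i, (θ (k + 1) i -
        ((Φᵀ * Matrix.diagonal d * Φ)⁻¹.mulVec
          ((Φᵀ * Matrix.diagonal d).mulVec
            (R + γ • P.mulVec (Φ.mulVec (θ k))))) i) ^ 2) ≤ ε (k + 1)) :
    let D : Matrix (Fin N) (Fin N) ℝ := Matrix.diagonal d
    let normD : (Fin N → ℝ) → ℝ := fun v => Real.sqrt (v ⬝ᵥ D.mulVec v)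
    let θstar : Fin n → ℝ :=
      -((Φᵀ * D * (γ • P - 1) * Φ)⁻¹.mulVec ((Φᵀ * D).mulVec R))
    normD (Φ.mulVec (θ T) - Φ.mulVec θstar) ≤
      Real.sqrt (⨆ i, hHerm.eigenvalues i) *
        (∑ k ∈ Finset.Icc 1 T, γ ^ (T - k) * Real.sqrt (ε k)) +
      γ ^ T * normD (Φ.mulVec (θ 0) - Φ.mulVec θstar) :=
  deterministic_periodic_TD_error_bound_general N n P d γ Φ R hPnonneg hProw hdpos hstat hγ0 hγ1 hΦ
    hHerm T ε θ hrec
end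

section
/- Let (Ω, ℱ, ℙ) be a probability space, ε ≥ 0, and θ, θ⁺ : Ω → ℝⁿ square-integrable random vectors satisfying 𝔼[‖θ⁺ − G(θ)‖₂²] ≤ ε, where G(θ) := (ΦᵀDΦ)⁻¹ΦᵀD(R + γPΦθ). Then 𝔼[‖Φθ⁺ − Φθ*‖_D²] ≤ ((1+γ²)/(1−γ²)) λ_max(ΦᵀDΦ) ε + ((1+γ²)/2) 𝔼[‖Φθ − Φθ*‖_D²], where θ* := −(ΦᵀD(γP − I)Φ)⁻¹ΦᵀDR. -/
/-!
Both `G(θ)` and `θ*` solve normal equations `ΦᵀD(R + γPΦx - Φy) = 0`, so `Φ(G(θ) - θ*)` is the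
`D`-orthogonal projection of `γP(Φθ - Φθ*)` onto the column space of `Φ`. The projection is
`‖·‖_D`-nonexpansive, and so is `P` (Jensen in every row, then stationarity `dᵀP = dᵀ`); hence
`‖ΦG(θ) - Φθ*‖_D ≤ γ‖Φθ - Φθ*‖_D`. Writing `Φθ⁺ - Φθ* = (ΦG(θ) - Φθ*) + Φ(θ⁺ - G(θ))`, Young's
inequality with `δ = (1 - γ²)/(2γ²)` and `‖Φv‖_D² = vᵀ(ΦᵀDΦ)v ≤ λ_max ‖v‖²` give the bound for
every outcome, and it is integrated.
-/

open Matrix BigOperators MeasureTheory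

open scoped MatrixOrder in
theorem Matrix.IsHermitian.dotProduct_mulVec_le_iSup_eigenvalues_mul {n : Type*} [Fintype n]
    [DecidableEq n] {A : Matrix n n ℝ} (hA : A.IsHermitian) (v : n → ℝ) :
    v ⬝ᵥ (A *ᵥ v) ≤ (⨆ i, hA.eigenvalues i) * (v ⬝ᵥ v) := by
  have hle : A ≤ algebraMap ℝ (Matrix n n ℝ) (⨆ i, hA.eigenvalues i) := by
    refine le_algebraMap_of_spectrum_le (fun x hx => ?_) hA.isSelfAdjoint
    rw [hA.spectrum_real_eq_range_eigenvalues] at hx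
    obtain ⟨i, rfl⟩ := hx
    exact le_ciSup (Set.finite_range _).bddAbove i
  have := (Matrix.le_iff.1 hle).dotProduct_mulVec_nonneg v
  simp only [star_trivial, Algebra.algebraMap_eq_smul_one, sub_mulVec, smul_mulVec, one_mulVec,
    dotProduct_sub, dotProduct_smul, smul_eq_mul, sub_nonneg] at this
  linarith

theorem Matrix.PosSemidef.iSup_eigenvalues_nonneg {n : Type*} [Fintype n] [DecidableEq n]
    {A : Matrix n n ℝ} (hA : A.PosSemidef) : 0 ≤ ⨆ i, hA.1.eigenvalues i :=
  Real.iSup_nonneg hA.eigenvalues_nonneg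

theorem Matrix.mulVec_injective_of_rank_eq_card_s18 {m n K : Type*} [Fintype m] [Fintype n] [Field K]
    {Φ : Matrix m n K} (h : Φ.rank = Fintype.card n) : Function.Injective Φ.mulVec := by
  have hrk := LinearMap.finrank_range_add_finrank_ker Φ.mulVecLin
  rw [Module.finrank_fintype_fun_eq_card, ← h, Matrix.rank, add_eq_left,
    Submodule.finrank_eq_zero, LinearMap.ker_eq_bot] at hrk
  exact hrk

section NormalEquations

variable {ι κ R : Type*} [Fintype ι] [Fintype κ] [DecidableEq κ] [CommRing R]

theorem mulVec_sub_mulVec_nonsing_inv_eq_zero {K : Matrix κ ι R} {Φ : Matrix ι κ R}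
    (h : IsUnit (K * Φ).det) (w : ι → R) :
    K *ᵥ (w - Φ *ᵥ ((K * Φ)⁻¹ *ᵥ (K *ᵥ w))) = 0 := by
  rw [mulVec_sub, mulVec_mulVec, mulVec_mulVec, mul_nonsing_inv _ h, one_mulVec, sub_self]

theorem mulVec_add_smul_sub_eq_zero_of_nonsing_inv [DecidableEq ι] {K : Matrix κ ι R}
    {P : Matrix ι ι R} {Φ : Matrix ι κ R} {γ : R} (h : IsUnit (K * (γ • P - 1) * Φ).det)
    (r : ι → R) :
    let s := -((K * (γ • P - 1) * Φ)⁻¹ *ᵥ (K *ᵥ r))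
    K *ᵥ (r + γ • (P *ᵥ (Φ *ᵥ s)) - Φ *ᵥ s) = 0 := by
  intro s
  have hs : (K * (γ • P - 1) * Φ) *ᵥ s = -(K *ᵥ r) := by
    rw [mulVec_neg, mulVec_mulVec, mul_nonsing_inv _ h, one_mulVec]
  rw [← mulVec_mulVec, ← mulVec_mulVec, sub_mulVec, smul_mulVec, one_mulVec] at hs
  rw [add_sub_assoc, mulVec_add, hs, add_neg_cancel]

end NormalEquations

theorem sq_mulVec_le_mulVec_sq {ι : Type*} [Fintype ι] {P : Matrix ι ι ℝ}
    (hP : ∀ i j, 0 ≤ P i j) (hProw : ∀ i, ∑ j, P i j = 1) (v : ι → ℝ) (i : ι) :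
    (P *ᵥ v) i ^ 2 ≤ (P *ᵥ v ^ 2) i := by
  have h := Finset.sum_sq_le_sum_mul_sum_of_sq_le_mul Finset.univ (r := fun j => P i j * v j)
    (fun j _ => hP i j) (fun j _ => mul_nonneg (hP i j) (sq_nonneg (v j)))
    (fun j _ => le_of_eq (by ring))
  simpa only [hProw i, one_mul, mulVec, dotProduct, Pi.pow_apply] using h

section WeightedInner

variable {ι κ : Type*} [Fintype ι] [DecidableEq ι] [Fintype κ] {d : ι → ℝ}

def weightedInner (d u v : ι → ℝ) : ℝ := u ⬝ᵥ (diagonal d *ᵥ v)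

theorem weightedInner_eq_sum (d u v : ι → ℝ) :
    weightedInner d u v = ∑ i, d i * (u i * v i) := by
  simp only [weightedInner, dotProduct, mulVec_diagonal]
  exact Finset.sum_congr rfl fun i _ => by ring

theorem weightedInner_self_eq_sum (d v : ι → ℝ) :
    weightedInner d v v = ∑ i, d i * v i ^ 2 := by
  simp only [weightedInner_eq_sum, sq]

theorem weightedInner_self_nonneg (hd : ∀ i, 0 ≤ d i) (v : ι → ℝ) :
    0 ≤ weightedInner d v v := by
  rw [weightedInner_self_eq_sum]
  exact Finset.sum_nonneg fun i _ => mul_nonneg (hd i) (sq_nonneg _)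

theorem weightedInner_self_pos (hd : ∀ i, 0 < d i) {v : ι → ℝ} (hv : v ≠ 0) :
    0 < weightedInner d v v := by
  simpa [weightedInner] using (posDef_diagonal_iff.2 hd).dotProduct_mulVec_pos hv

theorem weightedInner_sq_le (hd : ∀ i, 0 ≤ d i) (u v : ι → ℝ) :
    weightedInner d u v ^ 2 ≤ weightedInner d u u * weightedInner d v v := by
  simp only [weightedInner_eq_sum]
  refine Finset.sum_sq_le_sum_mul_sum_of_sq_le_mul _ (fun i _ => ?_) (fun i _ => ?_)
    (fun i _ => le_of_eq ?_)
  · exact mul_nonneg (hd i) (mul_self_nonneg _)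
  · exact mul_nonneg (hd i) (mul_self_nonneg _)
  · ring

theorem weightedInner_self_add_le (hd : ∀ i, 0 ≤ d i) {δ : ℝ} (hδ : 0 < δ) (a b : ι → ℝ) :
    weightedInner d (a + b) (a + b) ≤
      (1 + δ) * weightedInner d a a + (1 + δ⁻¹) * weightedInner d b b := by
  simp only [weightedInner_self_eq_sum, Finset.mul_sum, ← Finset.sum_add_distrib]
  refine Finset.sum_le_sum fun i _ => ?_
  have young : 2 * (a i * b i) ≤ δ * a i ^ 2 + δ⁻¹ * b i ^ 2 := by
    have := mul_nonneg (inv_nonneg.2 hδ.le) (sq_nonneg (δ * a i - b i))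
    have hδδ : δ⁻¹ * δ = 1 := inv_mul_cancel₀ hδ.ne'
    nlinarith
  simp only [Pi.add_apply]
  nlinarith [mul_le_mul_of_nonneg_left young (hd i)]

theorem weightedInner_smul_self (d : ι → ℝ) (c : ℝ) (v : ι → ℝ) :
    weightedInner d (c • v) (c • v) = c ^ 2 * weightedInner d v v := by
  simp only [weightedInner, mulVec_smul, smul_dotProduct, dotProduct_smul, smul_eq_mul]
  ring

theorem weightedInner_mulVec_left (d : ι → ℝ)
    (Φ : Matrix ι κ ℝ) (y : κ → ℝ) (z : ι → ℝ) :
    weightedInner d (Φ *ᵥ y) z = y ⬝ᵥ ((Φᵀ * diagonal d) *ᵥ z) := by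
  rw [weightedInner, ← mulVec_mulVec, dotProduct_comm, dotProduct_mulVec, ← mulVec_transpose,
    dotProduct_comm]

theorem weightedInner_mulVec_self (d : ι → ℝ)
    (Φ : Matrix ι κ ℝ) (y : κ → ℝ) :
    weightedInner d (Φ *ᵥ y) (Φ *ᵥ y) = y ⬝ᵥ ((Φᵀ * diagonal d * Φ) *ᵥ y) := by
  rw [weightedInner_mulVec_left, mulVec_mulVec]

variable {P : Matrix ι ι ℝ}

theorem weightedInner_mulVec_self_le (hP : ∀ i j, 0 ≤ P i j) (hProw : ∀ i, ∑ j, P i j = 1)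
    (hd : ∀ i, 0 ≤ d i) (hstat : d ᵥ* P = d) (v : ι → ℝ) :
    weightedInner d (P *ᵥ v) (P *ᵥ v) ≤ weightedInner d v v :=
  calc weightedInner d (P *ᵥ v) (P *ᵥ v)
      ≤ ∑ i, d i * (P *ᵥ v ^ 2) i := by
        rw [weightedInner_self_eq_sum]
        exact Finset.sum_le_sum fun i _ =>
          mul_le_mul_of_nonneg_left (sq_mulVec_le_mulVec_sq hP hProw v i) (hd i)
    _ = (d ᵥ* P) ⬝ᵥ v ^ 2 := dotProduct_mulVec d P _
    _ = weightedInner d v v := by rw [hstat, weightedInner_self_eq_sum]; rfl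

theorem weightedInner_mulVec_le (hP : ∀ i j, 0 ≤ P i j) (hProw : ∀ i, ∑ j, P i j = 1)
    (hd : ∀ i, 0 ≤ d i) (hstat : d ᵥ* P = d) (v : ι → ℝ) :
    weightedInner d v (P *ᵥ v) ≤ weightedInner d v v := by
  refine abs_le_of_sq_le_sq' ?_ (weightedInner_self_nonneg hd v) |>.2
  calc weightedInner d v (P *ᵥ v) ^ 2
      ≤ weightedInner d v v * weightedInner d (P *ᵥ v) (P *ᵥ v) := weightedInner_sq_le hd _ _
    _ ≤ weightedInner d v v ^ 2 := by
        rw [sq]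
        exact mul_le_mul_of_nonneg_left (weightedInner_mulVec_self_le hP hProw hd hstat v)
          (weightedInner_self_nonneg hd v)

theorem weightedInner_mulVec_self_le_of_normal_eq (hd : ∀ i, 0 ≤ d i) {Φ : Matrix ι κ ℝ}
    {w : ι → ℝ} {y : κ → ℝ} (h : (Φᵀ * diagonal d) *ᵥ (w - Φ *ᵥ y) = 0) :
    weightedInner d (Φ *ᵥ y) (Φ *ᵥ y) ≤ weightedInner d w w := by
  have hX : weightedInner d (Φ *ᵥ y) (Φ *ᵥ y) = weightedInner d (Φ *ᵥ y) w := by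
    have h' := weightedInner_mulVec_left d Φ y (w - Φ *ᵥ y)
    rw [h, dotProduct_zero, weightedInner, mulVec_sub, dotProduct_sub, sub_eq_zero] at h'
    exact h'.symm
  have hcs := weightedInner_sq_le hd (Φ *ᵥ y) w
  rw [← hX] at hcs
  nlinarith [weightedInner_self_nonneg hd (Φ *ᵥ y), weightedInner_self_nonneg hd w]

theorem weightedInner_mulVec_sub_le_of_normal_eq (hP : ∀ i j, 0 ≤ P i j)
    (hProw : ∀ i, ∑ j, P i j = 1) (hd : ∀ i, 0 ≤ d i) (hstat : d ᵥ* P = d)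
    {Φ : Matrix ι κ ℝ} {R : ι → ℝ} {γ : ℝ} {x₁ x₂ y₁ y₂ : κ → ℝ}
    (h₁ : (Φᵀ * diagonal d) *ᵥ (R + γ • (P *ᵥ (Φ *ᵥ x₁)) - Φ *ᵥ y₁) = 0)
    (h₂ : (Φᵀ * diagonal d) *ᵥ (R + γ • (P *ᵥ (Φ *ᵥ x₂)) - Φ *ᵥ y₂) = 0) :
    weightedInner d (Φ *ᵥ y₁ - Φ *ᵥ y₂) (Φ *ᵥ y₁ - Φ *ᵥ y₂) ≤
      γ ^ 2 * weightedInner d (Φ *ᵥ x₁ - Φ *ᵥ x₂) (Φ *ᵥ x₁ - Φ *ᵥ x₂) := by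
  set u := Φ *ᵥ x₁ - Φ *ᵥ x₂
  have h : (Φᵀ * diagonal d) *ᵥ (γ • (P *ᵥ u) - Φ *ᵥ (y₁ - y₂)) = 0 := by
    have : γ • (P *ᵥ u) - Φ *ᵥ (y₁ - y₂) =
        (R + γ • (P *ᵥ (Φ *ᵥ x₁)) - Φ *ᵥ y₁) - (R + γ • (P *ᵥ (Φ *ᵥ x₂)) - Φ *ᵥ y₂) := by
      simp only [u, mulVec_sub, smul_sub]
      abel
    rw [this, mulVec_sub, h₁, h₂, sub_zero]
  calc weightedInner d (Φ *ᵥ y₁ - Φ *ᵥ y₂) (Φ *ᵥ y₁ - Φ *ᵥ y₂)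
      = weightedInner d (Φ *ᵥ (y₁ - y₂)) (Φ *ᵥ (y₁ - y₂)) := by rw [mulVec_sub]
    _ ≤ weightedInner d (γ • (P *ᵥ u)) (γ • (P *ᵥ u)) :=
        weightedInner_mulVec_self_le_of_normal_eq hd h
    _ = γ ^ 2 * weightedInner d (P *ᵥ u) (P *ᵥ u) := weightedInner_smul_self d γ _
    _ ≤ γ ^ 2 * weightedInner d u u := by
        gcongr
        exact weightedInner_mulVec_self_le hP hProw hd hstat u

theorem posSemidef_transpose_mul_diagonal_mul_self (hd : ∀ i, 0 ≤ d i) (Φ : Matrix ι κ ℝ) :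
    (Φᵀ * diagonal d * Φ).PosSemidef := by
  simpa [conjTranspose_eq_transpose_of_trivial] using
    (PosSemidef.diagonal hd).conjTranspose_mul_mul_same Φ

variable [DecidableEq κ]

theorem isUnit_det_transpose_mul_diagonal_mul_self (hd : ∀ i, 0 < d i) {Φ : Matrix ι κ ℝ}
    (hΦ : Function.Injective Φ.mulVec) : IsUnit (Φᵀ * diagonal d * Φ).det := by
  have hpd := (posDef_diagonal_iff.2 hd).conjTranspose_mul_mul_same hΦ
  rw [conjTranspose_eq_transpose_of_trivial] at hpd
  exact (isUnit_iff_isUnit_det _).1 hpd.isUnit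

theorem isUnit_det_transpose_mul_diagonal_mul_smul_sub_one_mul
    (hP : ∀ i j, 0 ≤ P i j) (hProw : ∀ i, ∑ j, P i j = 1) (hd : ∀ i, 0 < d i)
    (hstat : d ᵥ* P = d) {γ : ℝ} (hγ0 : 0 ≤ γ) (hγ1 : γ < 1) {Φ : Matrix ι κ ℝ}
    (hΦ : Function.Injective Φ.mulVec) : IsUnit (Φᵀ * diagonal d * (γ • P - 1) * Φ).det := by
  rw [isUnit_iff_ne_zero, Ne, ← exists_mulVec_eq_zero_iff]
  rintro ⟨v, hv, hBv⟩
  set u := Φ *ᵥ v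
  have hu : u ≠ 0 := fun h => hv (hΦ (h.trans (mulVec_zero Φ).symm))
  have hquad : v ⬝ᵥ ((Φᵀ * diagonal d * (γ • P - 1) * Φ) *ᵥ v) =
      γ * weightedInner d u (P *ᵥ u) - weightedInner d u u := by
    rw [← mulVec_mulVec, ← mulVec_mulVec, ← weightedInner_mulVec_left, weightedInner,
      sub_mulVec, smul_mulVec, one_mulVec, mulVec_sub, mulVec_smul, dotProduct_sub,
      dotProduct_smul, smul_eq_mul, weightedInner, weightedInner]
  rw [hBv, dotProduct_zero] at hquad
  have hle := weightedInner_mulVec_le hP hProw (fun i => (hd i).le) hstat u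
  have hpos := weightedInner_self_pos hd hu
  nlinarith

theorem weightedInner_mulVec_sub_le_add_of_normal_eq (hP : ∀ i j, 0 ≤ P i j)
    (hProw : ∀ i, ∑ j, P i j = 1) (hd : ∀ i, 0 ≤ d i) (hstat : d ᵥ* P = d) {γ : ℝ}
    (hγ0 : 0 < γ) (hγ1 : γ < 1) {Φ : Matrix ι κ ℝ} (hA : (Φᵀ * diagonal d * Φ).IsHermitian)
    {R : ι → ℝ} {x g s : κ → ℝ}
    (hg : (Φᵀ * diagonal d) *ᵥ (R + γ • (P *ᵥ (Φ *ᵥ x)) - Φ *ᵥ g) = 0)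
    (hs : (Φᵀ * diagonal d) *ᵥ (R + γ • (P *ᵥ (Φ *ᵥ s)) - Φ *ᵥ s) = 0) (y : κ → ℝ) :
    weightedInner d (Φ *ᵥ y - Φ *ᵥ s) (Φ *ᵥ y - Φ *ᵥ s) ≤
      (1 + γ ^ 2) / (1 - γ ^ 2) * (⨆ i, hA.eigenvalues i) * ∑ i, (y i - g i) ^ 2 +
      (1 + γ ^ 2) / 2 * weightedInner d (Φ *ᵥ x - Φ *ᵥ s) (Φ *ᵥ x - Φ *ᵥ s) := by
  have hγ2 : 0 < 1 - γ ^ 2 := by nlinarith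
  set δ := (1 - γ ^ 2) / (2 * γ ^ 2) with hδ_def
  have hδ : 0 < δ := by positivity
  have hsplit : Φ *ᵥ y - Φ *ᵥ s = (Φ *ᵥ g - Φ *ᵥ s) + Φ *ᵥ (y - g) := by
    rw [mulVec_sub]
    abel
  have hray : weightedInner d (Φ *ᵥ (y - g)) (Φ *ᵥ (y - g)) ≤
      (⨆ i, hA.eigenvalues i) * ∑ i, (y i - g i) ^ 2 := by
    rw [weightedInner_mulVec_self]
    simpa [dotProduct, sq] using hA.dotProduct_mulVec_le_iSup_eigenvalues_mul (y - g)
  have hc₁ : (1 + δ) * γ ^ 2 = (1 + γ ^ 2) / 2 := by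
    rw [hδ_def]
    field_simp
    ring
  have hc₂ : 1 + δ⁻¹ = (1 + γ ^ 2) / (1 - γ ^ 2) := by
    rw [hδ_def, inv_div]
    field_simp
    ring
  calc weightedInner d (Φ *ᵥ y - Φ *ᵥ s) (Φ *ᵥ y - Φ *ᵥ s)
      ≤ (1 + δ) * weightedInner d (Φ *ᵥ g - Φ *ᵥ s) (Φ *ᵥ g - Φ *ᵥ s) +
          (1 + δ⁻¹) * weightedInner d (Φ *ᵥ (y - g)) (Φ *ᵥ (y - g)) := by
        rw [hsplit]
        exact weightedInner_self_add_le hd hδ _ _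
    _ ≤ (1 + δ) * (γ ^ 2 * weightedInner d (Φ *ᵥ x - Φ *ᵥ s) (Φ *ᵥ x - Φ *ᵥ s)) +
          (1 + δ⁻¹) * ((⨆ i, hA.eigenvalues i) * ∑ i, (y i - g i) ^ 2) := by
        gcongr
        exact weightedInner_mulVec_sub_le_of_normal_eq hP hProw hd hstat hg hs
    _ = _ := by
        rw [← hc₁, ← hc₂]
        ring

end WeightedInner

section Integrability

variable {Ω : Type*} [MeasurableSpace Ω] {μ : Measure Ω}

theorem MeasureTheory.MemLp.mulVec {𝕜 : Type*} [NontriviallyNormedField 𝕜] [CompleteSpace 𝕜]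
    {m n : Type*} [Fintype m] [Fintype n] {p : ENNReal} {u : Ω → n → 𝕜} (hu : MemLp u p μ)
    (M : Matrix m n 𝕜) : MemLp (fun ω => M *ᵥ u ω) p μ :=
  (LinearMap.toContinuousLinearMap M.mulVecLin).comp_memLp' hu

theorem MeasureTheory.MemLp.integrable_weightedInner_self {ι : Type*} [Fintype ι] [DecidableEq ι]
    {u : Ω → ι → ℝ} (hu : MemLp u 2 μ) (d : ι → ℝ) :
    Integrable (fun ω => weightedInner d (u ω) (u ω)) μ := by
  simp_rw [weightedInner_self_eq_sum]
  exact integrable_finsetSum _ fun i _ => (memLp_pi_iff.1 hu i).integrable_sq.const_mul (d i)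

theorem MeasureTheory.integral_le_mul_integral_add_mul_integral {f g h : Ω → ℝ} {a b : ℝ}
    (hf : 0 ≤ f) (hg : Integrable g μ) (hh : Integrable h μ)
    (hle : ∀ ω, f ω ≤ a * g ω + b * h ω) :
    ∫ ω, f ω ∂μ ≤ a * ∫ ω, g ω ∂μ + b * ∫ ω, h ω ∂μ := by
  rw [← integral_const_mul, ← integral_const_mul, ← integral_add (hg.const_mul a) (hh.const_mul b)]
  exact integral_mono_of_nonneg (.of_forall hf) ((hg.const_mul a).add (hh.const_mul b))
    (.of_forall hle)

end Integrability

theorem periodic_TD_one_step_squared_error_recursion_general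
    (N n : ℕ)
    (P : Matrix (Fin N) (Fin N) ℝ) (d : Fin N → ℝ) (γ : ℝ)
    (Φ : Matrix (Fin N) (Fin n) ℝ) (R : Fin N → ℝ)
    (hPnonneg : ∀ i j, 0 ≤ P i j)
    (hProw : ∀ i, ∑ j, P i j = 1)
    (hdpos : ∀ s, 0 < d s)
    (hstat : Matrix.vecMul d P = d)
    (hγ0 : 0 < γ) (hγ1 : γ < 1)
    (hΦ : Φ.rank = n)
    (hHerm : (Φᵀ * Matrix.diagonal d * Φ).IsHermitian)
    {Ω : Type*} [MeasurableSpace Ω] (Pr : Measure Ω) [IsProbabilityMeasure Pr]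
    (ε : ℝ)
    (θ θp : Ω → Fin n → ℝ)
    (hL2θ : ∀ i, MemLp (fun ω => θ ω i) 2 Pr)
    (hL2θp : ∀ i, MemLp (fun ω => θp ω i) 2 Pr)
    (hrec : (∫ ω, (∑ i, (θp ω i -
        ((Φᵀ * Matrix.diagonal d * Φ)⁻¹.mulVec
          ((Φᵀ * Matrix.diagonal d).mulVec
            (R + γ • P.mulVec (Φ.mulVec (θ ω))))) i) ^ 2) ∂Pr) ≤ ε) :
    let D : Matrix (Fin N) (Fin N) ℝ := Matrix.diagonal d
    let sqD : (Fin N → ℝ) → ℝ := fun v => v ⬝ᵥ D.mulVec v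
    let θstar : Fin n → ℝ :=
      -((Φᵀ * D * (γ • P - 1) * Φ)⁻¹.mulVec ((Φᵀ * D).mulVec R))
    (∫ ω, sqD (Φ.mulVec (θp ω) - Φ.mulVec θstar) ∂Pr) ≤
      ((1 + γ ^ 2) / (1 - γ ^ 2)) * (⨆ i, hHerm.eigenvalues i) * ε +
      ((1 + γ ^ 2) / 2) * (∫ ω, sqD (Φ.mulVec (θ ω) - Φ.mulVec θstar) ∂Pr) := by
  intro D sqD θstar
  have hd : ∀ i, 0 ≤ d i := fun i => (hdpos i).le
  have hΦinj := Φ.mulVec_injective_of_rank_eq_card_s18 (hΦ.trans (Fintype.card_fin n).symm)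
  set G : (Fin n → ℝ) → Fin n → ℝ := fun t =>
    (Φᵀ * D * Φ)⁻¹ *ᵥ ((Φᵀ * D) *ᵥ (R + γ • (P *ᵥ (Φ *ᵥ t))))
  have hG : ∀ t, (Φᵀ * D) *ᵥ (R + γ • (P *ᵥ (Φ *ᵥ t)) - Φ *ᵥ G t) = 0 := fun t =>
    mulVec_sub_mulVec_nonsing_inv_eq_zero
      (isUnit_det_transpose_mul_diagonal_mul_self hdpos hΦinj) _
  have hstar : (Φᵀ * D) *ᵥ (R + γ • (P *ᵥ (Φ *ᵥ θstar)) - Φ *ᵥ θstar) = 0 :=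
    mulVec_add_smul_sub_eq_zero_of_nonsing_inv
      (isUnit_det_transpose_mul_diagonal_mul_smul_sub_one_mul hPnonneg hProw hdpos hstat hγ0.le
        hγ1 hΦinj) R
  have hθ := memLp_pi_iff.2 hL2θ
  have hGθ : MemLp (fun ω => G (θ ω)) 2 Pr :=
    (((memLp_const R).add (((hθ.mulVec Φ).mulVec P).const_smul γ)).mulVec _).mulVec _
  have hε_int : Integrable (fun ω => ∑ i, (θp ω i - G (θ ω) i) ^ 2) Pr :=
    integrable_finsetSum _ fun i _ =>
      (memLp_pi_iff.1 ((memLp_pi_iff.2 hL2θp).sub hGθ) i).integrable_sq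
  have hθ_int : Integrable (fun ω => sqD (Φ *ᵥ θ ω - Φ *ᵥ θstar)) Pr :=
    ((hθ.mulVec Φ).sub (memLp_const _)).integrable_weightedInner_self d
  have hlmax := (posSemidef_transpose_mul_diagonal_mul_self hd Φ).iSup_eigenvalues_nonneg
  have hγ2 : 0 < 1 - γ ^ 2 := by nlinarith
  calc ∫ ω, sqD (Φ *ᵥ θp ω - Φ *ᵥ θstar) ∂Pr
      ≤ (1 + γ ^ 2) / (1 - γ ^ 2) * (⨆ i, hHerm.eigenvalues i) *
            ∫ ω, ∑ i, (θp ω i - G (θ ω) i) ^ 2 ∂Pr +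
          (1 + γ ^ 2) / 2 * ∫ ω, sqD (Φ *ᵥ θ ω - Φ *ᵥ θstar) ∂Pr :=
        integral_le_mul_integral_add_mul_integral (fun ω => weightedInner_self_nonneg hd _)
          hε_int hθ_int fun ω => weightedInner_mulVec_sub_le_add_of_normal_eq hPnonneg hProw hd
            hstat hγ0 hγ1 hHerm (hG (θ ω)) hstar (θp ω)
    _ ≤ _ := by gcongr

/-- If the square-integrable random vectors `θ, θ⁺` satisfy
`𝔼[‖θ⁺ − G(θ)‖₂²] ≤ ε`, where `G(θ) := (ΦᵀDΦ)⁻¹ΦᵀD(R + γPΦθ)`, then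
`𝔼[‖Φθ⁺ − Φθ*‖_D²] ≤ ((1+γ²)/(1−γ²)) λ_max(ΦᵀDΦ) ε
  + ((1+γ²)/2) 𝔼[‖Φθ − Φθ*‖_D²]`,
where `θ* := −(ΦᵀD(γP − I)Φ)⁻¹ΦᵀDR`. -/
theorem periodic_TD_one_step_squared_error_recursion
    (N n : ℕ) (hN : 0 < N) (hn : 0 < n) (hnN : n ≤ N)
    (P : Matrix (Fin N) (Fin N) ℝ) (d : Fin N → ℝ) (γ : ℝ)
    (Φ : Matrix (Fin N) (Fin n) ℝ) (R : Fin N → ℝ)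
    (hPnonneg : ∀ i j, 0 ≤ P i j)
    (hProw : ∀ i, ∑ j, P i j = 1)
    (hdpos : ∀ s, 0 < d s)
    (hdsum : ∑ s, d s = 1)
    (hstat : Matrix.vecMul d P = d)
    (hγ0 : 0 < γ) (hγ1 : γ < 1)
    (hΦ : Φ.rank = n)
    (hHerm : (Φᵀ * Matrix.diagonal d * Φ).IsHermitian)
    {Ω : Type*} [MeasurableSpace Ω] (Pr : Measure Ω) [IsProbabilityMeasure Pr]
    (ε : ℝ) (hε : 0 ≤ ε)
    (θ θp : Ω → Fin n → ℝ)
    (hL2θ : ∀ i, MemLp (fun ω => θ ω i) 2 Pr)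
    (hL2θp : ∀ i, MemLp (fun ω => θp ω i) 2 Pr)
    (hrec : (∫ ω, (∑ i, (θp ω i -
        ((Φᵀ * Matrix.diagonal d * Φ)⁻¹.mulVec
          ((Φᵀ * Matrix.diagonal d).mulVec
            (R + γ • P.mulVec (Φ.mulVec (θ ω))))) i) ^ 2) ∂Pr) ≤ ε) :
    let D : Matrix (Fin N) (Fin N) ℝ := Matrix.diagonal d
    let sqD : (Fin N → ℝ) → ℝ := fun v => v ⬝ᵥ D.mulVec v
    let θstar : Fin n → ℝ :=
      -((Φᵀ * D * (γ • P - 1) * Φ)⁻¹.mulVec ((Φᵀ * D).mulVec R))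
    (∫ ω, sqD (Φ.mulVec (θp ω) - Φ.mulVec θstar) ∂Pr) ≤
      ((1 + γ ^ 2) / (1 - γ ^ 2)) * (⨆ i, hHerm.eigenvalues i) * ε +
      ((1 + γ ^ 2) / 2) * (∫ ω, sqD (Φ.mulVec (θ ω) - Φ.mulVec θstar) ∂Pr) :=
  periodic_TD_one_step_squared_error_recursion_general N n P d γ Φ R hPnonneg hProw hdpos hstat hγ0
    hγ1 hΦ hHerm Pr ε θ θp hL2θ hL2θp hrec
end
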